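/- arXiv:2602.13883 — 3 statements merged into one kernel-verified Lean document; each statement's English description precedes it below -/
import Mathlib

section
/- Let n ≥ 1, i ∈ {1,…,n}, and let S₁, S₂ ⊆ [0,1]^n be disjoint compact connected sets, each separating the i-th opposite faces of [0,1]^n. Then, in the cube extended in the i-th direction, one of the faces lies on the opposite side of S₂ from S₁ and the other face lies on the opposite side of S₁ from S₂: there is ε ∈ {−,+} such that S₁ and the face I^{n,i,s}_{i,ε} lie in different connected components of I^{n,i,s} \ S₂, and S₂ and the face I^{n,i,s}_{i,ε*} lie in different connected components of I^{n,i,s} \ S₁. -/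
def unitCube (n : ℕ) : Set (Fin n → ℝ) := Set.Icc 0 1

def face (n : ℕ) (i : Fin n) (v : ℝ) : Set (Fin n → ℝ) := {x ∈ unitCube n | x i = v}

/-- `A` connects the `i`-th opposite faces of the unit cube: some connected subset of `A`
meets both faces. -/
def Connects (n : ℕ) (i : Fin n) (A : Set (Fin n → ℝ)) : Prop :=
  ∃ S ⊆ A, IsPreconnected S ∧ (S ∩ face n i 0).Nonempty ∧ (S ∩ face n i 1).Nonempty

/-- `A` separates the `i`-th opposite faces of the unit cube. -/
def Separates (n : ℕ) (i : Fin n) (A : Set (Fin n → ℝ)) : Prop :=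
  ¬ Connects n i (unitCube n \ A)

/-- `U` is open in the subspace topology of the unit cube. -/
def OpenInCube (n : ℕ) (U : Set (Fin n → ℝ)) : Prop :=
  ∃ V : Set (Fin n → ℝ), IsOpen V ∧ U = V ∩ unitCube n

/-- The unit cube extended by `s` in the `i`-th direction. -/
def extCube (n : ℕ) (i : Fin n) (s : ℝ) : Set (Fin n → ℝ) :=
  Set.Icc (fun k => if k = i then -s else 0) (fun k => if k = i then 1 + s else 1)

/-!
A closed set `A ⊆ [0,1]^n` separating the `i`-th faces of the cube also separates the two
extended faces `F₋ = {x_i = -s}` and `F₊ = {x_i = 1 + s}` in the extended cube `K`: a component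
of `K \ A` is path connected, and the piece of a path from `F₋` to `F₊` between its last visit
to `{x_i = 0}` before its first visit to `{x_i = 1}` stays in the unit cube.

Let `U` be the component of `K \ S₂` through a point of an extended face `F`. If `S₁` cannot
reach `F` inside `K \ S₂`, then `U` misses `S₁`; as `K` is connected, `closure U` meets `S₂`,
so `S₂ ∪ U` together with a point of `S₂ ∩ closure U` is a connected set reaching `F` inside
`K \ S₁`. Hence each extended face is reached by `S₁` avoiding `S₂` or by `S₂` avoiding `S₁`,
while neither set reaches both faces, since being connected it would then join `F₋` to `F₊`
in the complement of the other. The two consistent patterns are the two values of `ε`.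
-/

open Set

section Topological

variable {X : Type*} [TopologicalSpace X]

def LinkedIn (T A B : Set X) : Prop :=
  ∃ C ⊆ T, IsPreconnected C ∧ (C ∩ A).Nonempty ∧ (C ∩ B).Nonempty

theorem LinkedIn.symm {T A B : Set X} (h : LinkedIn T A B) : LinkedIn T B A :=
  let ⟨C, hCT, hC, hA, hB⟩ := h
  ⟨C, hCT, hC, hB, hA⟩

theorem LinkedIn.trans {T A S B : Set X} (hS : IsPreconnected S) (hST : S ⊆ T)
    (hAS : LinkedIn T A S) (hSB : LinkedIn T S B) : LinkedIn T A B := by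
  obtain ⟨C₁, hC₁T, hC₁, hC₁A, p, hpC₁, hpS⟩ := hAS
  obtain ⟨C₂, hC₂T, hC₂, ⟨q, hqC₂, hqS⟩, hC₂B⟩ := hSB
  refine ⟨C₁ ∪ (S ∪ C₂), union_subset hC₁T (union_subset hST hC₂T), ?_,
    hC₁A.mono (inter_subset_inter_left _ subset_union_left),
    hC₂B.mono (inter_subset_inter_left _ (subset_union_right.trans subset_union_right))⟩
  exact hC₁.union p hpC₁ (Or.inl hpS) (hS.union q hqS hqC₂ hC₂)

theorem connectedComponentIn_ne_of_not_linkedIn {T A B : Set X} (h : ¬ LinkedIn T A B)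
    {x y : X} (hx : x ∈ A) (hy : y ∈ B) (hyT : y ∈ T) :
    connectedComponentIn T x ≠ connectedComponentIn T y := by
  intro hxy
  have hyx : y ∈ connectedComponentIn T x := hxy ▸ mem_connectedComponentIn hyT
  have hxT : x ∈ T := connectedComponentIn_nonempty_iff.mp ⟨y, hyx⟩
  exact h ⟨connectedComponentIn T x, connectedComponentIn_subset T x,
    isPreconnected_connectedComponentIn, ⟨x, mem_connectedComponentIn hxT, hx⟩, ⟨y, hyx, hy⟩⟩

theorem closure_connectedComponentIn_inter_subset (F : Set X) (x : X) :
    closure (connectedComponentIn F x) ∩ F ⊆ connectedComponentIn F x := by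
  rintro z ⟨hzcl, hzF⟩
  have hpre : IsPreconnected (insert z (connectedComponentIn F x)) :=
    isPreconnected_connectedComponentIn.subset_closure (subset_insert _ _)
      (insert_subset hzcl subset_closure)
  by_cases hxF : x ∈ F
  · exact hpre.subset_connectedComponentIn (mem_insert_of_mem _ (mem_connectedComponentIn hxF))
      (insert_subset hzF (connectedComponentIn_subset F x)) (mem_insert z _)
  · rw [connectedComponentIn_eq_empty hxF, closure_empty] at hzcl
    exact hzcl.elim

theorem exists_isOpen_connectedComponentIn_eq_inter (F : Set X) [LocallyConnectedSpace F]
    (x : X) : ∃ W, IsOpen W ∧ connectedComponentIn F x = W ∩ F := by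
  by_cases hxF : x ∈ F
  · obtain ⟨W, hW, hWeq⟩ := isOpen_induced_iff.mp
      (isOpen_connectedComponent (x := (⟨x, hxF⟩ : F)))
    refine ⟨W, hW, ?_⟩
    rw [connectedComponentIn_eq_image hxF, ← hWeq, Subtype.image_preimage_coe, inter_comm]
  · exact ⟨∅, isOpen_empty, by rw [connectedComponentIn_eq_empty hxF, empty_inter]⟩

theorem closure_connectedComponentIn_diff_inter_nonempty {K A : Set X}
    (hK : IsPreconnected K) (hA : IsClosed A) [LocallyConnectedSpace ↥(K \ A)]
    (hAK : (A ∩ K).Nonempty) {x : X} (hx : x ∈ K \ A) :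
    (closure (connectedComponentIn (K \ A) x) ∩ A).Nonempty := by
  -- Otherwise the component would be a nonempty relatively clopen proper subset of `K`.
  obtain ⟨W, hW, hUW⟩ := exists_isOpen_connectedComponentIn_eq_inter (K \ A) x
  by_contra hUA
  have hclU : closure (connectedComponentIn (K \ A) x) ∩ K ⊆ W \ A := fun z ⟨hzcl, hzK⟩ => by
    have hzA : z ∉ A := fun hzA => hUA ⟨z, hzcl, hzA⟩
    have hzU := closure_connectedComponentIn_inter_subset _ _ ⟨hzcl, hzK, hzA⟩
    rw [hUW] at hzU
    exact ⟨hzU.1, hzA⟩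
  obtain ⟨a, haA, haK⟩ := hAK
  have hxW : x ∈ W := by
    have := mem_connectedComponentIn hx
    rw [hUW] at this
    exact this.1
  obtain ⟨z, hzK, hzW, hzU⟩ := hK (W \ A) (closure (connectedComponentIn (K \ A) x))ᶜ
    (hW.sdiff hA) isClosed_closure.isOpen_compl
    (fun z hzK => (em (z ∈ closure _)).imp (fun hz => hclU ⟨hz, hzK⟩) id)
    ⟨x, hx.1, hxW, hx.2⟩ ⟨a, haK, fun ha => hUA ⟨a, ha, haA⟩⟩
  refine hzU (subset_closure ?_)
  rw [hUW]
  exact ⟨hzW.1, hzK, hzW.2⟩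

theorem JoinedIn.of_mem_connectedComponentIn {F : Set X} [LocallyPathConnectedSpace F]
    {x y : X} (h : y ∈ connectedComponentIn F x) : JoinedIn F x y := by
  have hxF : x ∈ F := connectedComponentIn_nonempty_iff.mp ⟨y, h⟩
  rw [connectedComponentIn_eq_image hxF] at h
  obtain ⟨w, hw, rfl⟩ := h
  rw [joinedIn_iff_joined hxF w.2, ← connectedComponent_eq_iff_joined]
  exact connectedComponent_eq hw

theorem linkedIn_diff_of_not_linkedIn_diff {K S T G : Set X} (hK : IsPreconnected K)
    (hT : IsPreconnected T) (hTc : IsClosed T) [LocallyConnectedSpace ↥(K \ T)] (hTK : T ⊆ K)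
    (hTne : T.Nonempty) (hST : Disjoint S T) (hG : (G ∩ (K \ T)).Nonempty)
    (h : ¬ LinkedIn (K \ T) S G) : LinkedIn (K \ S) T G := by
  obtain ⟨y, hyG, hy⟩ := hG
  set U := connectedComponentIn (K \ T) y
  have hUS : Disjoint U S := disjoint_left.mpr fun z hzU hzS =>
    h ⟨U, connectedComponentIn_subset _ _, isPreconnected_connectedComponentIn, ⟨z, hzU, hzS⟩,
      ⟨y, mem_connectedComponentIn hy, hyG⟩⟩
  obtain ⟨a, haU, haT⟩ := closure_connectedComponentIn_diff_inter_nonempty hK hTc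
    (let ⟨t, ht⟩ := hTne; ⟨t, ht, hTK ht⟩) hy
  have hUa : IsPreconnected (insert a U) :=
    isPreconnected_connectedComponentIn.subset_closure (subset_insert a U)
      (insert_subset haU subset_closure)
  have hTS : T ⊆ K \ S := fun t ht => ⟨hTK ht, disjoint_right.mp hST ht⟩
  have hUKS : U ⊆ K \ S := fun z hz =>
    ⟨(connectedComponentIn_subset _ _ hz).1, disjoint_left.mp hUS hz⟩
  exact ⟨T ∪ insert a U, union_subset hTS (insert_subset (hTS haT) hUKS),
    hT.union a haT (mem_insert a U) hUa, ⟨a, Or.inl haT, haT⟩,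
    ⟨y, Or.inr (mem_insert_of_mem a (mem_connectedComponentIn hy)), hyG⟩⟩

theorem linkedIn_dichotomy {K S T F G : Set X} (hK : IsPreconnected K) (hS : IsPreconnected S)
    (hT : IsPreconnected T) (hTc : IsClosed T) [LocallyConnectedSpace ↥(K \ T)] (hSK : S ⊆ K)
    (hTK : T ⊆ K) (hTne : T.Nonempty) (hST : Disjoint S T)
    (hF : (F ∩ (K \ T)).Nonempty) (hG : (G ∩ (K \ T)).Nonempty)
    (hFG_S : ¬ LinkedIn (K \ S) F G) (hFG_T : ¬ LinkedIn (K \ T) F G) :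
    (¬ LinkedIn (K \ T) S G ∧ ¬ LinkedIn (K \ S) T F) ∨
      (¬ LinkedIn (K \ T) S F ∧ ¬ LinkedIn (K \ S) T G) := by
  have hSF_SG : ¬ (LinkedIn (K \ T) S F ∧ LinkedIn (K \ T) S G) := fun ⟨hSF, hSG⟩ =>
    hFG_T (hSF.symm.trans hS (fun x hx => ⟨hSK hx, disjoint_left.mp hST hx⟩) hSG)
  have hTF_TG : ¬ (LinkedIn (K \ S) T F ∧ LinkedIn (K \ S) T G) := fun ⟨hTF, hTG⟩ =>
    hFG_S (hTF.symm.trans hT (fun x hx => ⟨hTK hx, disjoint_right.mp hST hx⟩) hTG)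
  have hSF_TF := linkedIn_diff_of_not_linkedIn_diff hK hT hTc hTK hTne hST hF
  have hSG_TG := linkedIn_diff_of_not_linkedIn_diff hK hT hTc hTK hTne hST hG
  tauto

end Topological

theorem Convex.locallyPathConnectedSpace_diff {E : Type*} [AddCommGroup E] [Module ℝ E]
    [TopologicalSpace E] [IsTopologicalAddGroup E] [ContinuousSMul ℝ E] [LocallyConvexSpace ℝ E]
    {K A : Set E} (hK : Convex ℝ K) (hA : IsClosed A) : LocallyPathConnectedSpace ↥(K \ A) := by
  refine ⟨fun x ↦ ⟨fun s ↦ ⟨fun hs ↦ ?_, fun ⟨t, ht⟩ ↦ Filter.mem_of_superset ht.1.1 ht.2⟩⟩⟩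
  obtain ⟨t, ht, hts⟩ := (mem_nhds_subtype _ x s).mp hs
  obtain ⟨t', ⟨ht'x, ht'⟩, ht't⟩ := (LocallyConvexSpace.convex_basis (𝕜 := ℝ) x.1).mem_iff.mp
    (Filter.inter_mem ht (hA.isOpen_compl.mem_nhds x.2.2))
  refine ⟨(↑) ⁻¹' t', ⟨continuousAt_subtype_val.preimage_mem_nhds ht'x, ?_⟩,
    (preimage_mono (ht't.trans inter_subset_left)).trans hts⟩
  have hpre : ((↑) ⁻¹' t' : Set ↥(K \ A)) = (↑) ⁻¹' (t' ∩ K) := by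
    ext z; simp [z.2.1]
  rw [hpre]
  exact (ht'.inter hK).isPathConnected ⟨x, mem_of_mem_nhds ht'x, x.2.1⟩ |>.preimage_coe
    fun z hz => ⟨hz.2, (ht't hz.1).2⟩

theorem Continuous.exists_eq_forall_le_on_Icc {f : ℝ → ℝ} (hf : Continuous f) {a b d : ℝ}
    (hab : a ≤ b) (ha : f a ≤ d) (hb : d ≤ f b) :
    ∃ t ∈ Icc a b, f t = d ∧ ∀ u ∈ Icc a t, f u ≤ d := by
  set T := Icc a b ∩ f ⁻¹' {d}
  have hT : T.Nonempty :=
    let ⟨t, ht, hft⟩ := intermediate_value_Icc hab hf.continuousOn ⟨ha, hb⟩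
    ⟨t, ht, hft⟩
  have hTbdd : BddBelow T := ⟨a, fun t ht => ht.1.1⟩
  obtain ⟨htab, hft⟩ : sInf T ∈ T :=
    (isClosed_Icc.inter (isClosed_singleton.preimage hf)).csInf_mem hT hTbdd
  refine ⟨sInf T, htab, hft, fun u hu => le_of_not_gt fun hdu => ?_⟩
  obtain ⟨v, hv, hfv⟩ := intermediate_value_Icc hu.1 hf.continuousOn ⟨ha, hdu.le⟩
  have hTv : sInf T ≤ v := csInf_le hTbdd ⟨⟨hv.1, hv.2.trans (hu.2.trans htab.2)⟩, hfv⟩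
  have huv : u = v := le_antisymm (hu.2.trans hTv) hv.2
  exact hdu.ne' (huv ▸ hfv)

theorem Continuous.exists_eq_forall_ge_on_Icc {f : ℝ → ℝ} (hf : Continuous f) {a b c : ℝ}
    (hab : a ≤ b) (ha : f a ≤ c) (hb : c ≤ f b) :
    ∃ t ∈ Icc a b, f t = c ∧ ∀ u ∈ Icc t b, c ≤ f u := by
  obtain ⟨t, ht, hft, hle⟩ :=
    (continuous_neg.comp (hf.comp continuous_neg)).exists_eq_forall_le_on_Icc
      (a := -b) (b := -a) (d := -c) (neg_le_neg hab) (by simpa using hb) (by simpa using ha)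
  refine ⟨-t, ⟨le_neg.mpr ht.2, neg_le.mpr ht.1⟩, by simpa using hft, fun u hu => ?_⟩
  simpa using hle (-u) ⟨neg_le_neg hu.2, neg_le.mp hu.1⟩

theorem Continuous.exists_mapsTo_Icc {f : ℝ → ℝ} (hf : Continuous f) {a b c d : ℝ}
    (hab : a ≤ b) (ha : f a ≤ c) (hcd : c ≤ d) (hb : d ≤ f b) :
    ∃ t₀ t₁, t₀ ≤ t₁ ∧ f t₀ = c ∧ f t₁ = d ∧ MapsTo f (Icc t₀ t₁) (Icc c d) := by
  obtain ⟨t₁, ht₁, hft₁, hle⟩ := hf.exists_eq_forall_le_on_Icc hab (ha.trans hcd) hb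
  obtain ⟨t₀, ht₀, hft₀, hge⟩ := hf.exists_eq_forall_ge_on_Icc ht₁.1 ha (hcd.trans hft₁.ge)
  exact ⟨t₀, t₁, ht₀.2, hft₀, hft₁, fun u hu => ⟨hge u hu, hle u ⟨ht₀.1.trans hu.1, hu.2⟩⟩⟩

section Cube

variable {n : ℕ} {i : Fin n} {s : ℝ}

def extFace (n : ℕ) (i : Fin n) (s v : ℝ) : Set (Fin n → ℝ) := {z ∈ extCube n i s | z i = v}

theorem unitCube_subset_extCube (hs : 0 ≤ s) : unitCube n ⊆ extCube n i s := by
  intro x ⟨h0, h1⟩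
  refine ⟨fun k => ?_, fun k => ?_⟩ <;> dsimp only <;> split_ifs
  · exact (neg_nonpos.mpr hs).trans (h0 k)
  · exact h0 k
  · exact (h1 k).trans (le_add_of_nonneg_right hs)
  · exact h1 k

theorem mem_unitCube_of_mem_extCube {x : Fin n → ℝ} (hx : x ∈ extCube n i s)
    (h0 : 0 ≤ x i) (h1 : x i ≤ 1) : x ∈ unitCube n := by
  refine ⟨fun k => ?_, fun k => ?_⟩ <;> by_cases hk : k = i
  · exact hk ▸ h0
  · simpa [hk] using hx.1 k
  · exact hk ▸ h1
  · simpa [hk] using hx.2 k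

theorem extFace_nonempty {v : ℝ} (h0 : -s ≤ v) (h1 : v ≤ 1 + s) :
    (extFace n i s v).Nonempty := by
  refine ⟨Function.update 0 i v, ⟨fun k => ?_, fun k => ?_⟩, by simp⟩ <;>
    by_cases hk : k = i <;> simp [hk, h0, h1]

theorem extFace_subset_diff {v : ℝ} (hv : v < 0 ∨ 1 < v) {S : Set (Fin n → ℝ)}
    (hS : S ⊆ unitCube n) : extFace n i s v ⊆ extCube n i s \ S := by
  rintro z ⟨hzK, hzv⟩
  refine ⟨hzK, fun hzS => ?_⟩
  have := (hS hzS).1 i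
  have := (hS hzS).2 i
  simp only [Pi.zero_apply, Pi.one_apply] at *
  rcases hv with hv | hv <;> linarith

theorem not_linkedIn_extFace_of_separates (hs : 0 ≤ s) {A : Set (Fin n → ℝ)}
    (hA : IsClosed A) (hsep : Separates n i A) :
    ¬ LinkedIn (extCube n i s \ A) (extFace n i s (-s)) (extFace n i s (1 + s)) := by
  rintro ⟨C, hCK, hC, ⟨x, hxC, hx⟩, ⟨y, hyC, hy⟩⟩
  have hK : Convex ℝ (extCube n i s) := convex_Icc _ _
  have := hK.locallyPathConnectedSpace_diff hA
  obtain ⟨γ, hγ⟩ : JoinedIn (extCube n i s \ A) x y :=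
    .of_mem_connectedComponentIn (hC.subset_connectedComponentIn hxC hCK hyC)
  have hγA (t : ℝ) : γ.extend t ∈ extCube n i s \ A := by
    obtain ⟨u, hu⟩ : γ.extend t ∈ range γ := γ.extend_range ▸ mem_range_self t
    exact hu ▸ hγ u
  obtain ⟨t₀, t₁, ht, h₀, h₁, hmaps⟩ :=
    ((continuous_apply i).comp γ.continuous_extend).exists_mapsTo_Icc zero_le_one
      (by simpa [hx.2] using hs) zero_le_one (by simpa [hy.2] using hs)
  have hD : γ.extend '' Icc t₀ t₁ ⊆ unitCube n \ A := by
    rintro _ ⟨t, ht, rfl⟩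
    exact ⟨mem_unitCube_of_mem_extCube (hγA t).1 (hmaps ht).1 (hmaps ht).2, (hγA t).2⟩
  have h₀D := mem_image_of_mem γ.extend (left_mem_Icc.mpr ht)
  have h₁D := mem_image_of_mem γ.extend (right_mem_Icc.mpr ht)
  -- `Connects n i B` unfolds to `LinkedIn B (face n i 0) (face n i 1)`.
  exact hsep ⟨_, hD, isPreconnected_Icc.image _ γ.continuous_extend.continuousOn,
    ⟨_, h₀D, (hD h₀D).1, h₀⟩, ⟨_, h₁D, (hD h₁D).1, h₁⟩⟩

end Cube

theorem stmt15 {n : ℕ} (i : Fin n) (s : ℝ) (hs : 0 < s) (S₁ S₂ : Set (Fin n → ℝ))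
    (h₁ : S₁ ⊆ unitCube n) (h₂ : S₂ ⊆ unitCube n)
    (hc₁ : IsCompact S₁) (hc₂ : IsCompact S₂)
    (hconn₁ : IsConnected S₁) (hconn₂ : IsConnected S₂) (hdisj : Disjoint S₁ S₂)
    (hsep₁ : Separates n i S₁) (hsep₂ : Separates n i S₂) :
    ∃ ε : Bool,
      (∀ x ∈ S₁, ∀ y ∈ {z ∈ extCube n i s | z i = if ε then 1 + s else -s},
          connectedComponentIn (extCube n i s \ S₂) x ≠
            connectedComponentIn (extCube n i s \ S₂) y) ∧
      (∀ x ∈ S₂, ∀ y ∈ {z ∈ extCube n i s | z i = if ε then -s else 1 + s},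
          connectedComponentIn (extCube n i s \ S₁) x ≠
            connectedComponentIn (extCube n i s \ S₁) y) := by
  have hK : Convex ℝ (extCube n i s) := convex_Icc _ _
  have := hK.locallyPathConnectedSpace_diff hc₂.isClosed
  have hlo {S} (hS : S ⊆ unitCube n) : extFace n i s (-s) ⊆ extCube n i s \ S :=
    extFace_subset_diff (Or.inl (by linarith)) hS
  have hhi {S} (hS : S ⊆ unitCube n) : extFace n i s (1 + s) ⊆ extCube n i s \ S :=
    extFace_subset_diff (Or.inr (by linarith)) hS
  obtain ⟨ylo, hylo⟩ := extFace_nonempty (n := n) (i := i) le_rfl (by linarith : -s ≤ 1 + s)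
  obtain ⟨yhi, hyhi⟩ := extFace_nonempty (n := n) (i := i) (by linarith : -s ≤ 1 + s) le_rfl
  rcases linkedIn_dichotomy hK.isPreconnected hconn₁.isPreconnected hconn₂.isPreconnected
      hc₂.isClosed (h₁.trans (unitCube_subset_extCube hs.le))
      (h₂.trans (unitCube_subset_extCube hs.le)) hconn₂.nonempty hdisj
      ⟨ylo, hylo, hlo h₂ hylo⟩ ⟨yhi, hyhi, hhi h₂ hyhi⟩
      (not_linkedIn_extFace_of_separates hs.le hc₁.isClosed hsep₁)
      (not_linkedIn_extFace_of_separates hs.le hc₂.isClosed hsep₂) with ⟨h₁hi, h₂lo⟩ | ⟨h₁lo, h₂hi⟩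
  · exact ⟨true, fun x hx y hy => connectedComponentIn_ne_of_not_linkedIn h₁hi hx hy (hhi h₂ hy),
      fun x hx y hy => connectedComponentIn_ne_of_not_linkedIn h₂lo hx hy (hlo h₁ hy)⟩
  · exact ⟨false, fun x hx y hy => connectedComponentIn_ne_of_not_linkedIn h₁lo hx hy (hlo h₂ hy),
      fun x hx y hy => connectedComponentIn_ne_of_not_linkedIn h₂hi hx hy (hhi h₁ hy)⟩
end

section
/- Let n ≥ 1, i ∈ {1,…,n}, A ⊆ [0,1]^n a compact set that does not connect the i-th opposite faces of [0,1]^n, and Z ⊆ [0,1]^n an arbitrary subset with covering dimension at most 0. Then there exists an open neighborhood U of A ∪ Z in [0,1]^n that does not connect the i-th opposite faces of [0,1]^n. -/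
/-- Covering dimension at most `k`: every finite open cover admits an open shrinking
of order at most `k + 1`. -/
def covDimLE (X : Type*) [TopologicalSpace X] (k : ℕ) : Prop :=
  ∀ (ι : Type) (U : ι → Set X), Finite ι → (∀ a, IsOpen (U a)) → (⋃ a, U a) = Set.univ →
    ∃ V : ι → Set X, (∀ a, IsOpen (V a)) ∧ (∀ a, V a ⊆ U a) ∧ (⋃ a, V a) = Set.univ ∧
      ∀ x : X, {a | x ∈ V a}.Finite ∧ {a | x ∈ V a}.ncard ≤ k + 1

open Set Metric in
/-- In a metric space, separated sets have disjoint open neighborhoods. -/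
lemma aux_sep_nhds {X : Type*} [MetricSpace X] {s t : Set X}
    (h1 : Disjoint (closure s) t) (h2 : Disjoint s (closure t)) :
    ∃ U V : Set X, IsOpen U ∧ IsOpen V ∧ s ⊆ U ∧ t ⊆ V ∧ Disjoint U V := by
  rcases s.eq_empty_or_nonempty with rfl | hs
  · exact ⟨∅, univ, isOpen_empty, isOpen_univ, Subset.rfl, subset_univ t,
      by simp [Set.disjoint_left]⟩
  rcases t.eq_empty_or_nonempty with rfl | ht
  · exact ⟨univ, ∅, isOpen_univ, isOpen_empty, subset_univ s, Subset.rfl,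
      by simp [Set.disjoint_left]⟩
  refine ⟨{x | infDist x s < infDist x t}, {x | infDist x t < infDist x s},
    isOpen_lt (continuous_infDist_pt s) (continuous_infDist_pt t),
    isOpen_lt (continuous_infDist_pt t) (continuous_infDist_pt s), ?_, ?_, ?_⟩
  · intro x hx
    have hx0 : infDist x s = 0 := infDist_zero_of_mem hx
    have hxt : x ∉ closure t := fun hmem => h2.ne_of_mem hx hmem rfl
    have : 0 < infDist x (closure t) :=
      (isClosed_closure.notMem_iff_infDist_pos ht.closure).mp hxt
    rw [infDist_closure] at this
    simpa [hx0] using this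
  · intro x hx
    have hx0 : infDist x t = 0 := infDist_zero_of_mem hx
    have hxs : x ∉ closure s := fun hmem => h1.ne_of_mem hmem hx rfl
    have : 0 < infDist x (closure s) :=
      (isClosed_closure.notMem_iff_infDist_pos hs.closure).mp hxs
    rw [infDist_closure] at this
    simpa [hx0] using this
  · rw [Set.disjoint_left]
    intro x hx hx'
    exact absurd hx' (by simpa using hx.le)

open Set in
/-- In a compact Hausdorff space, if no connected component of a point of the closed set `K₀`
meets the closed set `K₁`, then there is a clopen set containing `K₀` and disjoint from `K₁`. -/
lemma aux_clopen_sep {X : Type*} [TopologicalSpace X] [CompactSpace X] [T2Space X]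
    {K₀ K₁ : Set X} (h₀ : IsClosed K₀) (h₁ : IsClosed K₁)
    (h : ∀ x ∈ K₀, Disjoint (connectedComponent x) K₁) :
    ∃ C : Set X, IsClopen C ∧ K₀ ⊆ C ∧ Disjoint C K₁ := by
  have key : ∀ x : X, x ∈ K₀ → ∃ C : Set X, IsClopen C ∧ x ∈ C ∧ Disjoint C K₁ := by
    intro x hx
    have hK₁c : IsCompact K₁ := h₁.isCompact
    have hdis : K₁ ∩ ⋂ (s : { s : Set X // IsClopen s ∧ x ∈ s }), (s : Set X) = ∅ := by
      rw [← connectedComponent_eq_iInter_isClopen x, inter_comm]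
      exact disjoint_iff_inter_eq_empty.mp (h x hx)
    obtain ⟨u, hu⟩ := hK₁c.elim_finite_subfamily_closed _
      (fun s : { s : Set X // IsClopen s ∧ x ∈ s } => s.2.1.1) hdis
    refine ⟨⋂ s ∈ u, (s : Set X), isClopen_biInter_finset fun s _ => s.2.1,
      mem_iInter₂.mpr fun s _ => s.2.2, ?_⟩
    rw [disjoint_iff_inter_eq_empty, inter_comm]
    exact hu
  choose! C hCcl hCmem hCdis using key
  have hcover : K₀ ⊆ ⋃ x : K₀, C x := fun y hy =>
    mem_iUnion.mpr ⟨⟨y, hy⟩, hCmem y hy⟩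
  obtain ⟨u, hu⟩ := h₀.isCompact.elim_finite_subcover (fun x : K₀ => C x)
    (fun x => (hCcl x x.2).2) hcover
  refine ⟨⋃ x ∈ u, C x, isClopen_biUnion_finset fun x _ => hCcl x x.2, hu, ?_⟩
  rw [Set.disjoint_left]
  rintro y hy hy1
  obtain ⟨x, -, hyx⟩ := mem_iUnion₂.mp hy
  exact (hCdis x x.2).ne_of_mem hyx hy1 rfl

open Set in
theorem stmt16 {n : ℕ} (i : Fin n) (A Z : Set (Fin n → ℝ))
    (hA : A ⊆ unitCube n) (hc : IsCompact A) (hnc : ¬ Connects n i A)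
    (hZ : Z ⊆ unitCube n) (hdim : covDimLE ↥Z 0) :
    ∃ U, OpenInCube n U ∧ A ∪ Z ⊆ U ∧ ¬ Connects n i U := by
  classical
  have hcube : IsCompact (unitCube n) := isCompact_Icc
  have hfaceclosed : ∀ v : ℝ, IsClosed {x : Fin n → ℝ | x i = v} :=
    fun v => isClosed_eq (continuous_apply i) continuous_const
  have hface : ∀ v : ℝ, IsCompact (face n i v) := fun v =>
    hcube.inter_right (hfaceclosed v)
  -- Step 1: split the compact set A by a clopen set
  haveI : CompactSpace A := isCompact_iff_compactSpace.mp hc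
  set K₀ : Set A := Subtype.val ⁻¹' {x : Fin n → ℝ | x i = 0} with hK₀def
  set K₁ : Set A := Subtype.val ⁻¹' {x : Fin n → ℝ | x i = 1} with hK₁def
  have hK₀ : IsClosed K₀ := (hfaceclosed 0).preimage continuous_subtype_val
  have hK₁ : IsClosed K₁ := (hfaceclosed 1).preimage continuous_subtype_val
  have hcomp : ∀ x ∈ K₀, Disjoint (connectedComponent x) K₁ := by
    intro x hx
    rw [Set.disjoint_right]
    intro y hy1 hyc
    apply hnc
    exact ⟨Subtype.val '' connectedComponent x, Subtype.coe_image_subset _ _,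
      isPreconnected_connectedComponent.image _ continuous_subtype_val.continuousOn,
      ⟨x, ⟨⟨x, mem_connectedComponent, rfl⟩, hA x.2, hx⟩⟩,
      ⟨y, ⟨⟨y, hyc, rfl⟩, hA y.2, hy1⟩⟩⟩
  obtain ⟨C, hCcl, hK₀C, hCdis⟩ := aux_clopen_sep hK₀ hK₁ hcomp
  set A₀ : Set (Fin n → ℝ) := Subtype.val '' C with hA₀def
  set A₁ : Set (Fin n → ℝ) := Subtype.val '' Cᶜ with hA₁def
  have hA₀c : IsCompact A₀ := hCcl.isClosed.isCompact.image continuous_subtype_val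
  have hA₁c : IsCompact A₁ := hCcl.compl.isClosed.isCompact.image continuous_subtype_val
  set F₀ : Set (Fin n → ℝ) := A₀ ∪ face n i 0 with hF₀def
  set F₁ : Set (Fin n → ℝ) := A₁ ∪ face n i 1 with hF₁def
  have hF₀c : IsCompact F₀ := hA₀c.union (hface 0)
  have hF₁c : IsCompact F₁ := hA₁c.union (hface 1)
  have hFdis : Disjoint F₀ F₁ := by
    rw [Set.disjoint_left]
    rintro x (⟨a, haC, rfl⟩ | hx0) hx1
    · rcases hx1 with ⟨b, hbC, hba⟩ | hx1
      · obtain rfl : b = a := Subtype.val_injective hba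
        exact hbC haC
      · exact hCdis.ne_of_mem haC (show a ∈ K₁ from hx1.2) rfl
    · rcases hx1 with ⟨b, hbC, hbx⟩ | hx1
      · exact hbC (hK₀C (show b ∈ K₀ from by rw [hK₀def]; simp [hbx, hx0.2]))
      · exact zero_ne_one (hx0.2.symm.trans hx1.2)
  -- Step 2: disjoint open neighborhoods with disjoint closures
  obtain ⟨W₀, W₁, hW₀o, hW₁o, hF₀W, hF₁W, hWdis⟩ :=
    SeparatedNhds.of_isCompact_isCompact hF₀c hF₁c hFdis
  obtain ⟨W₀', hW₀'o, hF₀W', hclW₀'⟩ :=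
    normal_exists_closure_subset hF₀c.isClosed hW₀o hF₀W
  obtain ⟨W₁', hW₁'o, hF₁W', hclW₁'⟩ :=
    normal_exists_closure_subset hF₁c.isClosed hW₁o hF₁W
  have hclcl : Disjoint (closure W₀') (closure W₁') := hWdis.mono hclW₀' hclW₁'
  -- Step 3: use zero-dimensionality of Z
  set O : Bool → Set (Fin n → ℝ) :=
    fun b => if b then (closure W₀')ᶜ else (closure W₁')ᶜ with hOdef
  have hOopen : ∀ b, IsOpen (O b) := by
    intro b; cases b <;> simp [hOdef, isClosed_closure.isOpen_compl]
  have hOcov : (⋃ b, (Subtype.val ⁻¹' O b : Set Z)) = Set.univ := by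
    rw [Set.eq_univ_iff_forall]
    intro z
    rw [Set.mem_iUnion]
    by_cases hz : (z : Fin n → ℝ) ∈ closure W₀'
    · exact ⟨false, by simp [hOdef]; exact fun h => hclcl.ne_of_mem hz h rfl⟩
    · exact ⟨true, by simp [hOdef, hz]⟩
  obtain ⟨V, hVo, hVsub, hVcov, hVcard⟩ := hdim Bool (fun b => Subtype.val ⁻¹' O b)
    inferInstance (fun b => (hOopen b).preimage continuous_subtype_val) hOcov
  have hVdis : ∀ z : Z, ¬(z ∈ V false ∧ z ∈ V true) := by
    rintro z ⟨h0, h1⟩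
    have h := (hVcard z).2
    have huniv : ({a | z ∈ V a} : Set Bool) = Set.univ := by
      ext b; cases b <;> simp [h0, h1]
    rw [huniv, Set.ncard_univ, Nat.card_eq_fintype_card] at h
    simp at h
  obtain ⟨O₀, hO₀o, hVO₀⟩ := isOpen_induced_iff.mp (hVo false)
  obtain ⟨O₁, hO₁o, hVO₁⟩ := isOpen_induced_iff.mp (hVo true)
  set E₀ : Set (Fin n → ℝ) := Subtype.val '' V false with hE₀def
  set E₁ : Set (Fin n → ℝ) := Subtype.val '' V true with hE₁def
  have hE₀sub : E₀ ⊆ (closure W₁')ᶜ := by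
    rintro _ ⟨z, hz, rfl⟩
    have h := hVsub false hz
    simpa [hOdef] using h
  have hE₁sub : E₁ ⊆ (closure W₀')ᶜ := by
    rintro _ ⟨z, hz, rfl⟩
    have h := hVsub true hz
    simpa [hOdef] using h
  have hZeq : E₀ ∪ E₁ = Z := by
    rw [hE₀def, hE₁def, ← Set.image_union]
    have huv : V false ∪ V true = Set.univ := by
      rw [Set.eq_univ_iff_forall]
      intro z
      have hz : z ∈ ⋃ b, V b := hVcov ▸ Set.mem_univ z
      obtain ⟨b, hb⟩ := Set.mem_iUnion.mp hz
      cases b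
      · exact Or.inl hb
      · exact Or.inr hb
    rw [huv, Subtype.coe_image_univ]
  have hE₀eq : E₀ = Z ∩ O₀ := by rw [hE₀def, ← hVO₀, Subtype.image_preimage_coe]
  have hE₁eq : E₁ = Z ∩ O₁ := by rw [hE₁def, ← hVO₁, Subtype.image_preimage_coe]
  have hEdis : ∀ x, x ∈ E₀ → x ∉ E₁ := by
    rintro _ ⟨z, hz, rfl⟩ ⟨w, hw, hwz⟩
    exact hVdis z ⟨hz, by rwa [show w = z from Subtype.val_injective hwz] at hw⟩
  have hclE₀E₁ : Disjoint (closure E₀) E₁ := by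
    rw [Set.disjoint_left]
    intro x hx hx1
    obtain ⟨y, hyO, hyE⟩ := mem_closure_iff.mp hx O₁ hO₁o (hE₁eq ▸ hx1).2
    have hyZ : y ∈ Z := hZeq ▸ Or.inl hyE
    exact hEdis y hyE (hE₁eq ▸ ⟨hyZ, hyO⟩)
  have hclE₁E₀ : Disjoint (closure E₁) E₀ := by
    rw [Set.disjoint_left]
    intro x hx hx0
    obtain ⟨y, hyO, hyE⟩ := mem_closure_iff.mp hx O₀ hO₀o (hE₀eq ▸ hx0).2
    have hyZ : y ∈ Z := hZeq ▸ Or.inr hyE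
    exact hEdis y (hE₀eq ▸ ⟨hyZ, hyO⟩) hyE
  -- Step 4: separated neighborhoods of F₀ ∪ E₀ and F₁ ∪ E₁
  have hdisW₁'E₀ : Disjoint W₁' (closure E₀) :=
    (Set.disjoint_left.mpr fun x hx hx' =>
      hE₀sub hx' (subset_closure hx)).closure_right hW₁'o
  have hdisW₀'E₁ : Disjoint W₀' (closure E₁) :=
    (Set.disjoint_left.mpr fun x hx hx' =>
      hE₁sub hx' (subset_closure hx)).closure_right hW₀'o
  have h1 : Disjoint (closure (F₀ ∪ E₀)) (F₁ ∪ E₁) := by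
    rw [closure_union, hF₀c.isClosed.closure_eq, Set.disjoint_left]
    rintro x (hx | hx) (hx' | hx')
    · exact hFdis.ne_of_mem hx hx' rfl
    · exact absurd (subset_closure (hF₀W' hx)) (hE₁sub hx')
    · exact hdisW₁'E₀.ne_of_mem (hF₁W' hx') hx rfl
    · exact hclE₀E₁.ne_of_mem hx hx' rfl
  have h2 : Disjoint (F₀ ∪ E₀) (closure (F₁ ∪ E₁)) := by
    rw [closure_union, hF₁c.isClosed.closure_eq, Set.disjoint_left]
    rintro x (hx | hx) (hx' | hx')
    · exact hFdis.ne_of_mem hx hx' rfl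
    · exact hdisW₀'E₁.ne_of_mem (hF₀W' hx) hx' rfl
    · exact absurd (subset_closure (hF₁W' hx')) (hE₀sub hx)
    · exact hclE₁E₀.ne_of_mem hx' hx rfl
  obtain ⟨G₀, G₁, hG₀o, hG₁o, hS₀G, hS₁G, hGdis⟩ := aux_sep_nhds h1 h2
  -- Conclusion
  refine ⟨(G₀ ∪ G₁) ∩ unitCube n, ⟨G₀ ∪ G₁, hG₀o.union hG₁o, rfl⟩, ?_, ?_⟩
  · rintro x (hx | hx)
    · refine ⟨?_, hA hx⟩
      have hAeq : A₀ ∪ A₁ = A := by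
        rw [hA₀def, hA₁def, ← Set.image_union, Set.union_compl_self,
          Subtype.coe_image_univ]
      rcases (hAeq ▸ hx : x ∈ A₀ ∪ A₁) with h | h
      · exact Or.inl (hS₀G (Or.inl (Or.inl h)))
      · exact Or.inr (hS₁G (Or.inl (Or.inl h)))
    · refine ⟨?_, hZ hx⟩
      rcases (hZeq ▸ hx : x ∈ E₀ ∪ E₁) with h | h
      · exact Or.inl (hS₀G (Or.inr h))
      · exact Or.inr (hS₁G (Or.inr h))
  · rintro ⟨S, hSU, hpre, ⟨x, hxS, hx0⟩, ⟨y, hyS, hy1⟩⟩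
    have hSsub : S ⊆ G₀ ∪ G₁ := fun z hz => (hSU hz).1
    have hx0' : x ∈ G₀ := hS₀G (Or.inl (Or.inr hx0))
    have hy1' : y ∈ G₁ := hS₁G (Or.inl (Or.inr hy1))
    obtain ⟨z, _, hz0, hz1⟩ := hpre G₀ G₁ hG₀o hG₁o hSsub ⟨x, hxS, hx0'⟩ ⟨y, hyS, hy1'⟩
    exact hGdis.ne_of_mem hz0 hz1 rfl
end

section
/- (Parametric Poincaré–Miranda) Let n ≥ 1 and f = (f₁,…,f_n) : [0,1]^n × [0,1] → ℝ^n be continuous with f_i ≥ 0 on {x : x_i = 0} × [0,1] and f_i ≤ 0 on {x : x_i = 1} × [0,1] for each i. Then there exists a connected subset W of f⁻¹({0}) with W ∩ ([0,1]^n × {0}) ≠ ∅ and W ∩ ([0,1]^n × {1}) ≠ ∅. -/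
/-!
Suppose no connected subset of the zero set `Z` of `f` joins the bottom and top faces. As `Z` is
compact and its connected components are intersections of clopen sets, `Z` is covered by disjoint
closed sets `Z₀ ⊇ bottom` and `Z₁ ⊇ top`. An Urysohn function `g`, equal to `0` on `Z₀` and `1`
on `Z₁`, makes `1/2 - g` a valid last component, so by the Poincaré–Miranda theorem in dimension
`n + 1` the map `(f, 1/2 - g)` vanishes somewhere; that point lies in `Z` but in neither piece.

Poincaré–Miranda itself comes from Sperner's lemma on Kuhn's triangulation of the cube, proved by
counting doors modulo two with induction on the dimension. Labelling each grid point of mesh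
`1 / k` by the first `i` such that it lies on the face `x i = 0`, or off the face `x i = 1` with
`f i ≥ 0`, a fully labelled simplex gives a point where `f ≤ 0` lying within `1 / k` of points
where `f i ≥ 0` for each `i`; these points accumulate at a zero of `f`.
-/

open Finset

namespace PoincareMiranda

/-! ### Sperner's lemma for Kuhn's triangulation -/

section Parity

variable {α : Type*}

lemma even_card_of_involution (s : Finset α) (g : α → α) (hmem : ∀ a ∈ s, g a ∈ s)
    (hinv : ∀ a ∈ s, g (g a) = a) (hne : ∀ a ∈ s, g a ≠ a) : Even #s := by
  have hsum : ∑ _a ∈ s, (1 : ZMod 2) = 0 :=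
    sum_involution (fun a _ => g a) (fun _ _ => by decide) (fun a ha _ => hne a ha) hmem hinv
  simpa [ZMod.natCast_eq_zero_iff_even] using hsum

variable [DecidableEq α] [Fintype α]

/-- If `L` is not injective, every point counted lies in each pair of points identified by `L`,
so there are none or two of them. -/
lemma card_filter_image_erase_eq_erase_mod_two (L : α → α) (b : α) :
    #{a | (univ.erase a).image L = univ.erase b} % 2 = if Function.Surjective L then 1 else 0 := by
  by_cases hinj : Function.Injective L
  · have hsurj := Finite.injective_iff_surjective.1 hinj
    obtain ⟨a₀, ha₀⟩ := hsurj b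
    have himage : ∀ a, (univ.erase a).image L = univ.erase (L a) := fun a => by
      rw [image_erase hinj, image_univ_of_surjective hsurj]
    suffices #{a | (univ.erase a).image L = univ.erase b} = 1 by simp [this, hsurj]
    rw [card_eq_one]
    refine ⟨a₀, eq_singleton_iff_unique_mem.2 ⟨by simp [himage, ha₀], fun a ha => hinj ?_⟩⟩
    simp only [mem_filter, mem_univ, true_and, himage] at ha
    rw [ha₀, ← erase_inj _ (mem_univ _), ha]
  · rw [if_neg (mt Finite.injective_iff_surjective.2 hinj)]
    obtain ⟨c, d, hcd, hne⟩ := Function.not_injective_iff.1 hinj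
    have himage_pair : ∀ a, (a = c ∨ a = d) → (univ.erase a).image L = univ.image L := by
      have key : ∀ c d, L c = L d → c ≠ d → (univ.erase c).image L = univ.image L :=
        fun c d hcd hne => by
          refine (image_subset_image (erase_subset _ _)).antisymm fun x hx => ?_
          obtain ⟨u, -, rfl⟩ := mem_image.1 hx
          by_cases hu : u = c
          · exact mem_image.2 ⟨d, mem_erase.2 ⟨hne.symm, mem_univ _⟩, by rw [hu, hcd]⟩
          · exact mem_image_of_mem _ (mem_erase.2 ⟨hu, mem_univ _⟩)
      rintro a (rfl | rfl)
      exacts [key _ _ hcd hne, key _ _ hcd.symm hne.symm]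
    have hfilter : univ.filter (fun a => (univ.erase a).image L = univ.erase b) =
        if univ.image L = univ.erase b then {c, d} else ∅ := by
      ext a
      by_cases ha : a = c ∨ a = d
      · split_ifs with h <;> simp [himage_pair a ha, h, ha]
      · have : ¬ (univ.erase a).image L = univ.erase b := fun h => by
          have hinjOn : Set.InjOn L (univ.erase a : Finset α) := by
            rw [← card_image_iff, h, card_erase_of_mem (mem_univ _),
              card_erase_of_mem (mem_univ _)]
          rw [not_or] at ha
          exact hne (hinjOn (by simpa using Ne.symm ha.1) (by simpa using Ne.symm ha.2) hcd)
        split_ifs <;> simp [this, ha]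
    rw [hfilter]
    split_ifs <;> simp [card_pair hne]

end Parity

abbrev KuhnSimplex (M k : ℕ) := (Fin M → Fin k) × Equiv.Perm (Fin M)

section Kuhn

variable {M k : ℕ}

/-- Vertex `j` of the simplex of Kuhn's triangulation of `[0, k]^M` with base point `y` and
permutation `π`, namely `y + e_{π 0} + ⋯ + e_{π (j-1)}`. -/
def kuhnVertex (y : Fin M → Fin k) (π : Equiv.Perm (Fin M)) (j : Fin (M + 1)) : Fin M → ℕ :=
  fun i => y i + if (π.symm i : ℕ) < j then 1 else 0

lemma kuhnVertex_le (y : Fin M → Fin k) (π : Equiv.Perm (Fin M)) (j : Fin (M + 1)) (i : Fin M) :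
    kuhnVertex y π j i ≤ k := by
  have := (y i).isLt
  unfold kuhnVertex; split <;> omega

lemma kuhnVertex_le_add_one (y : Fin M → Fin k) (π : Equiv.Perm (Fin M)) (j j' : Fin (M + 1))
    (i : Fin M) : kuhnVertex y π j i ≤ kuhnVertex y π j' i + 1 := by
  unfold kuhnVertex; split <;> split <;> omega

def raise (y : Fin M → Fin k) (c : Fin M) (h : (y c : ℕ) + 1 < k) : Fin M → Fin k :=
  Function.update y c ⟨y c + 1, h⟩

def lower (y : Fin M → Fin k) (c : Fin M) : Fin M → Fin k :=
  Function.update y c ⟨y c - 1, by omega⟩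

lemma lower_raise (y : Fin M → Fin k) (c : Fin M) (h : (y c : ℕ) + 1 < k) :
    lower (raise y c h) c = y := by
  ext i
  by_cases hi : i = c
  · subst hi; simp [lower, raise]
  · simp [lower, raise, hi]

lemma lower_apply_self_add_one_lt {y : Fin M → Fin k} {c : Fin M} (hc : 1 ≤ (y c : ℕ)) :
    (lower y c c : ℕ) + 1 < k := by
  have := (y c).isLt
  simp only [lower, Function.update_self]
  omega

/-- Stated with `c' = c` to avoid rewriting inside the proof `h`. -/
lemma raise_lower {y : Fin M → Fin k} {c c' : Fin M} (hc : 1 ≤ (y c : ℕ)) (hc' : c' = c)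
    (h : (lower y c c' : ℕ) + 1 < k) : raise (lower y c) c' h = y := by
  subst hc'
  ext i
  by_cases hi : i = c'
  · subst hi; simp [lower, raise]; omega
  · simp [lower, raise, hi]

variable {m : ℕ}

lemma kuhnVertex_mul_swap (y : Fin (m + 1) → Fin k) (π : Equiv.Perm (Fin (m + 1)))
    {j t : Fin (m + 2)} (h0 : j ≠ 0) (hl : j ≠ Fin.last (m + 1)) (ht : t ≠ j) :
    kuhnVertex y (π * Equiv.swap (j.pred h0) (j.castPred hl)) t = kuhnVertex y π t := by
  funext i
  have ht' : (t : ℕ) ≠ j := fun h => ht (Fin.ext h)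
  have hj0 : (j : ℕ) ≠ 0 := fun h => h0 (Fin.ext h)
  simp only [kuhnVertex, Equiv.Perm.mul_def, Equiv.symm_trans_apply, Equiv.symm_swap]
  congr 2
  apply propext
  rcases eq_or_ne (π.symm i) (j.pred h0) with hv | hv1
  · rw [hv, Equiv.swap_apply_left]; simp; omega
  · rcases eq_or_ne (π.symm i) (j.castPred hl) with hv | hv2
    · rw [hv, Equiv.swap_apply_right]; simp; omega
    · rw [Equiv.swap_apply_of_ne_of_ne hv1 hv2]

lemma kuhnVertex_raise (y : Fin (m + 1) → Fin k) (π : Equiv.Perm (Fin (m + 1)))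
    (hb : (y (π 0) : ℕ) + 1 < k) (t : Fin (m + 1)) :
    kuhnVertex (raise y (π 0) hb) (π * finRotate (m + 1)) t.castSucc = kuhnVertex y π t.succ := by
  funext i
  obtain ⟨v, rfl⟩ := π.surjective i
  simp only [kuhnVertex, Equiv.Perm.mul_def, Equiv.symm_trans_apply, Equiv.symm_apply_apply]
  by_cases hv : v = 0
  · subst hv
    have : (finRotate (m + 1)).symm 0 = Fin.last m := by
      rw [Equiv.symm_apply_eq, finRotate_last]
    simp [raise, this, Nat.le_of_lt_succ t.isLt]
  · have hval := coe_finRotate_symm_of_ne_zero hv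
    have hv' : (v : ℕ) ≠ 0 := fun h => hv (Fin.ext h)
    simp only [raise, Function.update_of_ne (π.injective.ne hv), hval, Fin.val_castSucc,
      Fin.val_succ]
    congr 2
    apply propext
    omega

lemma kuhnVertex_succ_cons (c : Fin k) (y : Fin m → Fin k) (σ : Equiv.Perm (Fin m))
    (hc : (c : ℕ) + 1 = k) (t : Fin (m + 1)) :
    kuhnVertex (Fin.cons c y) (Equiv.Perm.decomposeFin.symm (0, σ)) t.succ =
      Fin.cons k (kuhnVertex y σ t) := by
  set π := Equiv.Perm.decomposeFin.symm (0, σ)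
  have hπ_succ : ∀ i, π.symm i.succ = (σ.symm i).succ := fun i => by
    rw [Equiv.symm_apply_eq, Equiv.Perm.decomposeFin_symm_apply_succ]
    simp
  have hπ_zero : π.symm 0 = 0 := by
    rw [Equiv.symm_apply_eq, Equiv.Perm.decomposeFin_symm_apply_zero]
  funext i
  refine Fin.cases ?_ (fun i => ?_) i
  · simp [kuhnVertex, hπ_zero, hc]
  · simp [kuhnVertex, hπ_succ]

end Kuhn

section Labelling

variable {M k : ℕ}

/-- Labels `i.castSucc` stand for the coordinate directions and `Fin.last M` is a label with no
constraint; this is the Sperner condition adapted to Kuhn's triangulation of `[0, k]^M`. -/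
structure IsSpernerLabelling (k : ℕ) (ℓ : (Fin M → ℕ) → Fin (M + 1)) : Prop where
  lt_of_eq_castSucc : ∀ v i, ℓ v = i.castSucc → v i < k
  le_castSucc_of_eq_zero : ∀ v i, v i = 0 → ℓ v ≤ i.castSucc

def IsFullyLabelled (ℓ : (Fin M → ℕ) → Fin (M + 1)) (y : Fin M → Fin k)
    (π : Equiv.Perm (Fin M)) : Prop :=
  univ.image (fun j => ℓ (kuhnVertex y π j)) = univ

instance (ℓ : (Fin M → ℕ) → Fin (M + 1)) (y : Fin M → Fin k) (π : Equiv.Perm (Fin M)) :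
    Decidable (IsFullyLabelled ℓ y π) :=
  inferInstanceAs (Decidable (_ = _))

def IsDoor (ℓ : (Fin M → ℕ) → Fin (M + 1)) (y : Fin M → Fin k) (π : Equiv.Perm (Fin M))
    (j : Fin (M + 1)) : Prop :=
  (univ.erase j).image (fun t => ℓ (kuhnVertex y π t)) = univ.erase 0

instance (ℓ : (Fin M → ℕ) → Fin (M + 1)) (y : Fin M → Fin k) (π : Equiv.Perm (Fin M))
    (j : Fin (M + 1)) : Decidable (IsDoor ℓ y π j) :=
  inferInstanceAs (Decidable (_ = _))

lemma card_isDoor_mod_two (ℓ : (Fin M → ℕ) → Fin (M + 1)) (y : Fin M → Fin k)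
    (π : Equiv.Perm (Fin M)) :
    #{j | IsDoor ℓ y π j} % 2 = if IsFullyLabelled ℓ y π then 1 else 0 := by
  have : IsFullyLabelled ℓ y π ↔ Function.Surjective (fun j => ℓ (kuhnVertex y π j)) := by
    simp [IsFullyLabelled, eq_univ_iff_forall, Function.Surjective]
  rw [if_congr this rfl rfl]
  exact card_filter_image_erase_eq_erase_mod_two _ 0

variable {m : ℕ} {ℓ : (Fin (m + 1) → ℕ) → Fin (m + 2)} (y : Fin (m + 1) → Fin k)
  (π : Equiv.Perm (Fin (m + 1)))

lemma isDoor_raise_last_iff (hb : (y (π 0) : ℕ) + 1 < k) :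
    IsDoor ℓ (raise y (π 0) hb) (π * finRotate (m + 1)) (Fin.last (m + 1)) ↔ IsDoor ℓ y π 0 := by
  have herase_last : univ.erase (Fin.last (m + 1)) = univ.image Fin.castSucc := by
    ext a; simp
  have herase_zero : univ.erase (0 : Fin (m + 2)) = univ.image Fin.succ := by
    ext a; simp
  simp only [IsDoor, herase_last, herase_zero, image_image, Function.comp_def,
    kuhnVertex_raise]

lemma isDoor_mul_swap_iff {j : Fin (m + 2)} (h0 : j ≠ 0) (hl : j ≠ Fin.last (m + 1)) :
    IsDoor ℓ y (π * Equiv.swap (j.pred h0) (j.castPred hl)) j ↔ IsDoor ℓ y π j := by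
  unfold IsDoor
  rw [image_congr fun t ht => by
    rw [kuhnVertex_mul_swap y π h0 hl (ne_of_mem_erase (mem_coe.1 ht))]]

lemma one_le_of_isDoor_last (hℓ : IsSpernerLabelling k ℓ)
    (hd : IsDoor ℓ y π (Fin.last (m + 1))) : 1 ≤ (y (π (Fin.last m)) : ℕ) := by
  by_contra! hy
  have hmem : Fin.last (m + 1) ∈
      (univ.erase (Fin.last (m + 1))).image (fun t => ℓ (kuhnVertex y π t)) := by
    rw [hd]; exact mem_erase.2 ⟨Fin.last_pos.ne', mem_univ _⟩
  obtain ⟨t, ht, hlabel⟩ := mem_image.1 hmem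
  have hcoord : kuhnVertex y π t (π (Fin.last m)) = 0 := by
    have := Fin.val_lt_last (ne_of_mem_erase ht)
    simp only [kuhnVertex, Equiv.symm_apply_apply, Fin.val_last]
    split_ifs <;> omega
  have := hℓ.le_castSucc_of_eq_zero _ _ hcoord
  rw [hlabel, ← not_lt] at this
  exact this (Fin.castSucc_lt_last _)

lemma eq_zero_of_isDoor_zero (hℓ : IsSpernerLabelling k ℓ) (hy : (y (π 0) : ℕ) + 1 = k)
    (hd : IsDoor ℓ y π 0) : π 0 = 0 := by
  by_contra hne
  have hmem : (π 0).castSucc ∈ (univ.erase 0).image (fun t => ℓ (kuhnVertex y π t)) := by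
    rw [hd]; exact mem_erase.2 ⟨Fin.castSucc_ne_zero_iff.2 hne, mem_univ _⟩
  obtain ⟨t, ht, hlabel⟩ := mem_image.1 hmem
  have hcoord : kuhnVertex y π t (π 0) = k := by
    simp only [kuhnVertex, Equiv.symm_apply_apply, Fin.val_zero]
    rw [if_pos (Nat.pos_of_ne_zero (Fin.val_ne_zero_iff.2 (ne_of_mem_erase ht)))]
    exact hy
  have := hℓ.lt_of_eq_castSucc _ _ hlabel
  omega

end Labelling

section Face

variable {m k : ℕ} {ℓ : (Fin (m + 1) → ℕ) → Fin (m + 2)}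

/-- The labelling induced on the face `v 0 = k`, where the label `0` does not occur. -/
def faceLabelling (ℓ : (Fin (m + 1) → ℕ) → Fin (m + 2)) (k : ℕ) : (Fin m → ℕ) → Fin (m + 1) :=
  fun v => Fin.predAbove 0 (ℓ (Fin.cons k v))

lemma IsSpernerLabelling.succ_faceLabelling (hℓ : IsSpernerLabelling k ℓ) (v : Fin m → ℕ) :
    (faceLabelling ℓ k v).succ = ℓ (Fin.cons k v) := by
  refine Fin.succ_predAbove_zero fun h => ?_
  have := hℓ.lt_of_eq_castSucc _ 0 h
  simp at this

lemma IsSpernerLabelling.face (hℓ : IsSpernerLabelling k ℓ) :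
    IsSpernerLabelling k (faceLabelling ℓ k) where
  lt_of_eq_castSucc v i h := by
    have := hℓ.lt_of_eq_castSucc (Fin.cons k v) i.succ
    rw [← hℓ.succ_faceLabelling, h] at this
    simpa using this rfl
  le_castSucc_of_eq_zero v i h := by
    have := hℓ.le_castSucc_of_eq_zero (Fin.cons k v) i.succ (by simpa using h)
    rwa [← hℓ.succ_faceLabelling, ← Fin.succ_castSucc, Fin.succ_le_succ_iff] at this

lemma IsSpernerLabelling.isDoor_zero_cons_iff (hℓ : IsSpernerLabelling k ℓ) {c : Fin k}
    (hc : (c : ℕ) + 1 = k) (y : Fin m → Fin k) (σ : Equiv.Perm (Fin m)) :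
    IsDoor ℓ (Fin.cons c y) (Equiv.Perm.decomposeFin.symm (0, σ)) 0 ↔
      IsFullyLabelled (faceLabelling ℓ k) y σ := by
  have herase_zero : univ.erase (0 : Fin (m + 2)) = univ.image Fin.succ := by
    ext a; simp
  have himage : (univ.erase 0).image
      (fun t => ℓ (kuhnVertex (Fin.cons c y) (Equiv.Perm.decomposeFin.symm (0, σ)) t)) =
      (univ.image fun j => faceLabelling ℓ k (kuhnVertex y σ j)).image Fin.succ := by
    simp only [herase_zero, image_image, Function.comp_def, kuhnVertex_succ_cons c y σ hc,
      hℓ.succ_faceLabelling]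
  rw [IsDoor, IsFullyLabelled, himage, herase_zero]
  exact (image_injective (Fin.succ_injective _)).eq_iff

/-- The facet `t.2` of the simplex `t.1` is the one opposite to vertex `0` and lies in the face
`v (π 0) = k` of the cube. -/
def IsTopFacet (t : KuhnSimplex (m + 1) k × Fin (m + 2)) : Prop :=
  t.2 = 0 ∧ (t.1.1 (t.1.2 0) : ℕ) + 1 = k

instance (t : KuhnSimplex (m + 1) k × Fin (m + 2)) : Decidable (IsTopFacet t) :=
  inferInstanceAs (Decidable (_ ∧ _))

/-- A door on the face `v (π 0) = k` has `π 0 = 0`, so it lies on the face `v 0 = k`. -/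
lemma IsSpernerLabelling.card_isDoor_isTopFacet (hk : 0 < k) (hℓ : IsSpernerLabelling k ℓ) :
    #{t : KuhnSimplex (m + 1) k × Fin (m + 2) | IsDoor ℓ t.1.1 t.1.2 t.2 ∧ IsTopFacet t} =
      #{s : KuhnSimplex m k | IsFullyLabelled (faceLabelling ℓ k) s.1 s.2} := by
  have hc : ((⟨k - 1, by omega⟩ : Fin k) : ℕ) + 1 = k := Nat.sub_add_cancel hk
  have hcons : ∀ (y : Fin (m + 1) → Fin k) (π : Equiv.Perm (Fin (m + 1))),
      (y (π 0) : ℕ) + 1 = k → π 0 = 0 →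
        Fin.cons ⟨k - 1, by omega⟩ (Fin.tail y) = y ∧
          Equiv.Perm.decomposeFin.symm (0, (Equiv.Perm.decomposeFin π).2) = π :=
      fun y π hy hπ => by
    have hy0 : y 0 = ⟨k - 1, by omega⟩ := Fin.ext (by rw [hπ] at hy; simp; omega)
    have hπ' : (0, (Equiv.Perm.decomposeFin π).2) = Equiv.Perm.decomposeFin π :=
      Prod.ext (by simp [Equiv.Perm.decomposeFin, hπ]) rfl
    rw [← hy0, Fin.cons_self_tail, hπ', Equiv.symm_apply_apply]
    exact ⟨rfl, rfl⟩
  symm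
  refine card_nbij' (fun s => ((Fin.cons ⟨k - 1, by omega⟩ s.1,
      Equiv.Perm.decomposeFin.symm (0, s.2)), 0))
    (fun t => (Fin.tail t.1.1, (Equiv.Perm.decomposeFin t.1.2).2)) ?_ ?_ ?_ ?_
  · rintro ⟨y, σ⟩ hs
    rw [mem_coe, mem_filter] at hs ⊢
    exact ⟨mem_univ _, (hℓ.isDoor_zero_cons_iff hc y σ).2 hs.2, rfl, by simpa using hc⟩
  · rintro ⟨⟨y, π⟩, j⟩ ht
    rw [mem_coe, mem_filter] at ht ⊢
    obtain ⟨-, hd, rfl, hy⟩ := ht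
    obtain ⟨hy', hπ'⟩ := hcons y π hy (eq_zero_of_isDoor_zero y π hℓ hy hd)
    refine ⟨mem_univ _, (hℓ.isDoor_zero_cons_iff hc _ _).1 ?_⟩
    dsimp only
    rwa [hy', hπ']
  · rintro ⟨y, σ⟩ -
    simp
  · rintro ⟨⟨y, π⟩, j⟩ ht
    rw [mem_coe, mem_filter] at ht
    obtain ⟨-, hd, rfl, hy⟩ := ht
    obtain ⟨hy', hπ'⟩ := hcons y π hy (eq_zero_of_isDoor_zero y π hℓ hy hd)
    simp only [hy', hπ']

end Face

section Partner

variable {m k : ℕ} {ℓ : (Fin (m + 1) → ℕ) → Fin (m + 2)}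

/-- The other simplex containing the facet of `t.1` opposite to vertex `t.2`, paired with the
position of that facet in it; `t` itself if the facet lies on the face `v (π 0) = k`. -/
noncomputable def partner :
    KuhnSimplex (m + 1) k × Fin (m + 2) → KuhnSimplex (m + 1) k × Fin (m + 2)
  | ((y, π), j) =>
    if h0 : j = 0 then
      if hb : (y (π 0) : ℕ) + 1 < k then
        ((raise y (π 0) hb, π * finRotate (m + 1)), Fin.last (m + 1))
      else ((y, π), j)
    else if hl : j = Fin.last (m + 1) then
      ((lower y (π (Fin.last m)), π * (finRotate (m + 1))⁻¹), 0)
    else ((y, π * Equiv.swap (j.pred h0) (j.castPred hl)), j)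

variable (y : Fin (m + 1) → Fin k) (π : Equiv.Perm (Fin (m + 1)))

lemma partner_zero (hb : (y (π 0) : ℕ) + 1 < k) :
    partner ((y, π), 0) = ((raise y (π 0) hb, π * finRotate (m + 1)), Fin.last (m + 1)) := by
  simp [partner, hb]

lemma partner_last :
    partner ((y, π), Fin.last (m + 1)) =
      ((lower y (π (Fin.last m)), π * (finRotate (m + 1))⁻¹), 0) := by
  simp [partner]

lemma partner_of_ne {j : Fin (m + 2)} (h0 : j ≠ 0) (hl : j ≠ Fin.last (m + 1)) :
    partner ((y, π), j) = ((y, π * Equiv.swap (j.pred h0) (j.castPred hl)), j) := by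
  simp [partner, h0, hl]

lemma mul_finRotate_apply_last : (π * finRotate (m + 1)) (Fin.last m) = π 0 := by
  simp

lemma mul_inv_finRotate_apply_zero : (π * (finRotate (m + 1))⁻¹) 0 = π (Fin.last m) := by
  rw [Equiv.Perm.mul_apply, Equiv.Perm.inv_def, (finRotate _).symm_apply_eq.2 finRotate_last.symm]

variable {y π}

lemma add_one_lt_of_not_isTopFacet (ht : ¬ IsTopFacet ((y, π), (0 : Fin (m + 2)))) :
    (y (π 0) : ℕ) + 1 < k := by
  have := (y (π 0)).isLt
  simp only [IsTopFacet, true_and] at ht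
  omega

lemma lower_add_one_lt_of_isDoor_last (hℓ : IsSpernerLabelling k ℓ)
    (hd : IsDoor ℓ y π (Fin.last (m + 1))) :
    (lower y (π (Fin.last m)) ((π * (finRotate (m + 1))⁻¹) 0) : ℕ) + 1 < k := by
  rw [mul_inv_finRotate_apply_zero]
  exact lower_apply_self_add_one_lt (one_le_of_isDoor_last y π hℓ hd)

lemma IsSpernerLabelling.isDoor_partner (hℓ : IsSpernerLabelling k ℓ)
    {t : KuhnSimplex (m + 1) k × Fin (m + 2)}
    (hd : IsDoor ℓ t.1.1 t.1.2 t.2) (ht : ¬ IsTopFacet t) :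
    IsDoor ℓ (partner t).1.1 (partner t).1.2 (partner t).2 ∧ ¬ IsTopFacet (partner t) := by
  obtain ⟨⟨y, π⟩, j⟩ := t
  dsimp only at *
  by_cases h0 : j = 0
  · subst h0
    rw [partner_zero y π (add_one_lt_of_not_isTopFacet ht)]
    exact ⟨(isDoor_raise_last_iff y π _).2 hd, fun h => Fin.last_pos.ne' h.1⟩
  by_cases hl : j = Fin.last (m + 1)
  · subst hl
    have hb := lower_add_one_lt_of_isDoor_last hℓ hd
    rw [partner_last]
    refine ⟨?_, fun h => by simp only [IsTopFacet] at h; omega⟩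
    have := isDoor_raise_last_iff (ℓ := ℓ) _ _ hb
    rw [raise_lower (one_le_of_isDoor_last y π hℓ hd) (mul_inv_finRotate_apply_zero π),
      inv_mul_cancel_right] at this
    exact this.1 hd
  · rw [partner_of_ne y π h0 hl]
    exact ⟨(isDoor_mul_swap_iff y π h0 hl).2 hd, fun h => h0 h.1⟩

lemma IsSpernerLabelling.partner_partner (hℓ : IsSpernerLabelling k ℓ)
    {t : KuhnSimplex (m + 1) k × Fin (m + 2)}
    (hd : IsDoor ℓ t.1.1 t.1.2 t.2) (ht : ¬ IsTopFacet t) : partner (partner t) = t := by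
  obtain ⟨⟨y, π⟩, j⟩ := t
  by_cases h0 : j = 0
  · subst h0
    rw [partner_zero y π (add_one_lt_of_not_isTopFacet ht), partner_last,
      mul_finRotate_apply_last, lower_raise, mul_inv_cancel_right]
  by_cases hl : j = Fin.last (m + 1)
  · subst hl
    rw [partner_last, partner_zero _ _ (lower_add_one_lt_of_isDoor_last hℓ hd),
      raise_lower (one_le_of_isDoor_last y π hℓ hd) (mul_inv_finRotate_apply_zero π),
      inv_mul_cancel_right]
  · rw [partner_of_ne y π h0 hl, partner_of_ne y _ h0 hl, mul_assoc, Equiv.swap_mul_self,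
      mul_one]

lemma partner_ne {t : KuhnSimplex (m + 1) k × Fin (m + 2)} (ht : ¬ IsTopFacet t) :
    partner t ≠ t := by
  obtain ⟨⟨y, π⟩, j⟩ := t
  by_cases h0 : j = 0
  · subst h0
    rw [partner_zero y π (add_one_lt_of_not_isTopFacet ht)]
    exact fun h => Fin.last_pos.ne' (congrArg Prod.snd h)
  by_cases hl : j = Fin.last (m + 1)
  · subst hl
    rw [partner_last]
    exact fun h => Fin.last_pos.ne (congrArg Prod.snd h)
  · rw [partner_of_ne y π h0 hl]
    intro h
    have hswap : Equiv.swap (j.pred h0) (j.castPred hl) = 1 :=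
      mul_left_cancel ((congrArg (·.1.2) h).trans (mul_one π).symm)
    have := congrArg (· (j.pred h0)) hswap
    simp only [Equiv.swap_apply_left, Equiv.Perm.one_apply, Fin.ext_iff, Fin.val_pred,
      Fin.coe_castPred] at this
    exact Fin.val_ne_zero_iff.2 h0 (by omega)

end Partner

section Counting

lemma card_isFullyLabelled_mod_two {M k : ℕ} (ℓ : (Fin M → ℕ) → Fin (M + 1)) :
    #{s : KuhnSimplex M k | IsFullyLabelled ℓ s.1 s.2} % 2 =
      #{t : KuhnSimplex M k × Fin (M + 1) | IsDoor ℓ t.1.1 t.1.2 t.2} % 2 := by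
  have hfibres : #{t : KuhnSimplex M k × Fin (M + 1) | IsDoor ℓ t.1.1 t.1.2 t.2} =
      ∑ s : KuhnSimplex M k, #{j | IsDoor ℓ s.1 s.2 j} := by
    simp only [card_filter]
    exact Fintype.sum_prod_type _
  rw [hfibres, card_filter, sum_nat_mod]
  conv_rhs => rw [sum_nat_mod]
  refine congrArg (· % 2) (sum_congr rfl fun s _ => ?_)
  rw [card_isDoor_mod_two]
  split_ifs <;> rfl

variable {m k : ℕ} {ℓ : (Fin (m + 1) → ℕ) → Fin (m + 2)}

lemma IsSpernerLabelling.even_card_isDoor_not_isTopFacet (hℓ : IsSpernerLabelling k ℓ) :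
    Even #{t : KuhnSimplex (m + 1) k × Fin (m + 2) |
      IsDoor ℓ t.1.1 t.1.2 t.2 ∧ ¬ IsTopFacet t} := by
  refine even_card_of_involution _ partner (fun t ht => ?_) (fun t ht => ?_) (fun t ht => ?_) <;>
    simp only [mem_filter, mem_univ, true_and] at ht ⊢
  exacts [hℓ.isDoor_partner ht.1 ht.2, hℓ.partner_partner ht.1 ht.2, partner_ne ht.2]

end Counting

theorem IsSpernerLabelling.odd_card_isFullyLabelled {M k : ℕ} (hk : 0 < k)
    {ℓ : (Fin M → ℕ) → Fin (M + 1)} (hℓ : IsSpernerLabelling k ℓ) : Odd #{s : KuhnSimplex M k | IsFullyLabelled ℓ s.1 s.2} := by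
  induction M with
  | zero =>
    have hall : ∀ s : KuhnSimplex 0 k, IsFullyLabelled ℓ s.1 s.2 := fun s =>
      eq_univ_of_forall fun b => mem_image.2 ⟨0, mem_univ _, Subsingleton.elim (α := Fin 1) _ _⟩
    simp [hall]
  | succ m ih =>
    -- Doors off the top face pair up under `partner`; those on it are counted by `ih`.
    have hsplit := card_filter_add_card_filter_not (s := univ.filter
      fun t : KuhnSimplex (m + 1) k × Fin (m + 2) => IsDoor ℓ t.1.1 t.1.2 t.2) IsTopFacet
    simp only [filter_filter] at hsplit
    rw [Nat.odd_iff, card_isFullyLabelled_mod_two, ← hsplit, hℓ.card_isDoor_isTopFacet hk]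
    obtain ⟨a, ha⟩ := hℓ.even_card_isDoor_not_isTopFacet
    rw [ha, Nat.add_mod, ← Nat.odd_iff.1 (ih hℓ.face)]
    omega

theorem IsSpernerLabelling.exists_isFullyLabelled {M k : ℕ} (hk : 0 < k)
    {ℓ : (Fin M → ℕ) → Fin (M + 1)} (hℓ : IsSpernerLabelling k ℓ) :
    ∃ s : KuhnSimplex M k, IsFullyLabelled ℓ s.1 s.2 := by
  obtain ⟨s, hs⟩ := card_pos.1 (hℓ.odd_card_isFullyLabelled hk).pos
  exact ⟨s, (mem_filter.1 hs).2⟩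

/-! ### The Poincaré–Miranda theorem -/

section Analysis

open Filter Topology

variable {M k : ℕ}

noncomputable def gridPoint (k : ℕ) (v : Fin M → ℕ) : Fin M → ℝ := fun i => v i / k

lemma gridPoint_mem_unitCube (hk : 0 < k) {v : Fin M → ℕ} (hv : ∀ i, v i ≤ k) :
    gridPoint k v ∈ unitCube M :=
  ⟨fun i => by simp only [gridPoint, Pi.zero_apply]; positivity,
    fun i => show (v i : ℝ) / k ≤ 1 from
      div_le_one_of_le₀ (by exact_mod_cast hv i) (Nat.cast_nonneg k)⟩

lemma dist_gridPoint_le (hk : 0 < k) {v w : Fin M → ℕ} (hvw : ∀ i, v i ≤ w i + 1)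
    (hwv : ∀ i, w i ≤ v i + 1) : dist (gridPoint k v) (gridPoint k w) ≤ 1 / k := by
  have hk' : (0 : ℝ) < k := by exact_mod_cast hk
  refine (dist_pi_le_iff (by positivity)).2 fun i => ?_
  rw [Real.dist_eq, gridPoint, gridPoint, ← sub_div, abs_div, abs_of_pos hk']
  gcongr
  have h1 : (v i : ℝ) ≤ w i + 1 := by exact_mod_cast hvw i
  have h2 : (w i : ℝ) ≤ v i + 1 := by exact_mod_cast hwv i
  exact abs_sub_le_iff.2 ⟨by linarith, by linarith⟩

open Classical in
noncomputable def zeroDirections (f : (Fin M → ℝ) → Fin M → ℝ) (k : ℕ) (v : Fin M → ℕ) :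
    Finset (Fin M) :=
  univ.filter fun i => v i = 0 ∨ v i < k ∧ 0 ≤ f (gridPoint k v) i

noncomputable def zeroLabel (f : (Fin M → ℝ) → Fin M → ℝ) (k : ℕ) (v : Fin M → ℕ) :
    Fin (M + 1) :=
  (insert (Fin.last M) ((zeroDirections f k v).image Fin.castSucc)).min' (insert_nonempty _ _)

variable {f : (Fin M → ℝ) → Fin M → ℝ}

lemma mem_zeroDirections {v : Fin M → ℕ} {i : Fin M} :
    i ∈ zeroDirections f k v ↔ v i = 0 ∨ v i < k ∧ 0 ≤ f (gridPoint k v) i := by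
  simp [zeroDirections]

lemma zeroLabel_le_castSucc {v : Fin M → ℕ} {i : Fin M}
    (h : v i = 0 ∨ v i < k ∧ 0 ≤ f (gridPoint k v) i) : zeroLabel f k v ≤ i.castSucc :=
  min'_le _ _ (mem_insert_of_mem (mem_image_of_mem _ (mem_zeroDirections.2 h)))

lemma of_zeroLabel_eq_castSucc {v : Fin M → ℕ} {i : Fin M} (h : zeroLabel f k v = i.castSucc) :
    v i = 0 ∨ v i < k ∧ 0 ≤ f (gridPoint k v) i := by
  have hmem := min'_mem (insert (Fin.last M) ((zeroDirections f k v).image Fin.castSucc))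
    (insert_nonempty _ _)
  change zeroLabel f k v ∈ _ at hmem
  rw [h] at hmem
  rcases mem_insert.1 hmem with h' | h'
  · exact absurd h' (Fin.castSucc_lt_last i).ne
  · obtain ⟨i', hi', hi⟩ := mem_image.1 h'
    rwa [Fin.castSucc_injective _ hi, mem_zeroDirections] at hi'

lemma not_of_zeroLabel_eq_last {v : Fin M → ℕ} (h : zeroLabel f k v = Fin.last M) (i : Fin M) :
    ¬ (v i = 0 ∨ v i < k ∧ 0 ≤ f (gridPoint k v) i) := fun hi =>
  (Fin.castSucc_lt_last i).not_ge (h ▸ zeroLabel_le_castSucc hi)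

lemma isSpernerLabelling_zeroLabel (hk : 0 < k) : IsSpernerLabelling k (zeroLabel f k) where
  lt_of_eq_castSucc v i h := by
    rcases of_zeroLabel_eq_castSucc h with h | h
    · omega
    · exact h.1
  le_castSucc_of_eq_zero v i h := zeroLabel_le_castSucc (Or.inl h)

lemma exists_approx_zero (hk : 0 < k) (hzero : ∀ i, ∀ x ∈ face M i 0, 0 ≤ f x i)
    (hone : ∀ i, ∀ x ∈ face M i 1, f x i ≤ 0) :
    ∃ z ∈ unitCube M, (∀ i, f z i ≤ 0) ∧
      ∀ i, ∃ u ∈ unitCube M, dist u z ≤ 1 / k ∧ 0 ≤ f u i := by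
  have hk' : (k : ℝ) ≠ 0 := by positivity
  obtain ⟨⟨y, π⟩, hs⟩ := (isSpernerLabelling_zeroLabel (f := f) hk).exists_isFullyLabelled hk
  have hlabel : ∀ b, ∃ j, zeroLabel f k (kuhnVertex y π j) = b := fun b => by
    simpa using (eq_univ_iff_forall.1 hs) b
  have hmem : ∀ j, gridPoint k (kuhnVertex y π j) ∈ unitCube M := fun j =>
    gridPoint_mem_unitCube hk (kuhnVertex_le y π j)
  obtain ⟨jz, hjz⟩ := hlabel (Fin.last M)
  refine ⟨_, hmem jz, fun i => ?_, fun i => ?_⟩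
  · have := not_of_zeroLabel_eq_last hjz i
    rcases (kuhnVertex_le y π jz i).lt_or_eq with hlt | heq
    · simp only [not_or, not_and, not_le, hlt, true_implies] at this
      exact this.2.le
    · exact hone i _ ⟨hmem jz, by simp [gridPoint, heq, hk']⟩
  · obtain ⟨ji, hji⟩ := hlabel i.castSucc
    refine ⟨_, hmem ji, dist_gridPoint_le hk (kuhnVertex_le_add_one y π ji jz)
      (kuhnVertex_le_add_one y π jz ji), ?_⟩
    rcases of_zeroLabel_eq_castSucc hji with h | h
    · exact hzero i _ ⟨hmem ji, by simp [gridPoint, h]⟩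
    · exact h.2

theorem poincare_miranda (f : (Fin M → ℝ) → Fin M → ℝ) (hf : ContinuousOn f (unitCube M))
    (hzero : ∀ i, ∀ x ∈ face M i 0, 0 ≤ f x i) (hone : ∀ i, ∀ x ∈ face M i 1, f x i ≤ 0) :
    ∃ x ∈ unitCube M, f x = 0 := by
  choose z hz hfz u hu hdist hfu using fun N : ℕ =>
    exists_approx_zero (k := N + 1) N.succ_pos hzero hone
  obtain ⟨x, hx, φ, hφ, hzx⟩ := (isCompact_Icc : IsCompact (unitCube M)).tendsto_subseq hz
  have hf_comp : ∀ w : ℕ → Fin M → ℝ, (∀ N, w N ∈ unitCube M) → Tendsto w atTop (𝓝 x) →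
      ∀ i, Tendsto (fun N => f (w N) i) atTop (𝓝 (f x i)) := fun w hw hwx i =>
    ((continuous_apply i).tendsto _).comp <|
      (hf x hx).tendsto.comp (tendsto_nhdsWithin_iff.2 ⟨hwx, Eventually.of_forall hw⟩)
  have hmesh : Tendsto (fun N => 1 / ((φ N + 1 : ℕ) : ℝ)) atTop (𝓝 0) := by
    simpa [Function.comp_def] using
      (tendsto_one_div_add_atTop_nhds_zero_nat (𝕜 := ℝ)).comp hφ.tendsto_atTop
  have hux : ∀ i, Tendsto (fun N => u (φ N) i) atTop (𝓝 x) := fun i =>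
    hzx.congr_dist <| squeeze_zero (fun _ => dist_nonneg)
      (fun N => (dist_comm _ _).trans_le (hdist (φ N) i)) hmesh
  refine ⟨x, hx, funext fun i => le_antisymm ?_ ?_⟩
  · exact le_of_tendsto' (hf_comp _ (fun N => hz (φ N)) hzx i) fun N => hfz (φ N) i
  · exact ge_of_tendsto' (hf_comp _ (fun N => hu (φ N) i) (hux i) i) fun N => hfu (φ N) i

end Analysis

/-! ### Separating the zero set -/

/-- Each point of `A` has a clopen neighbourhood missing `B`, since its connected component is
the intersection of its clopen neighbourhoods; finitely many of them cover `A`. -/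
lemma exists_isClopen_of_forall_disjoint_connectedComponent {X : Type*} [TopologicalSpace X]
    [T2Space X] [CompactSpace X] {A B : Set X} (hA : IsClosed A) (hB : IsClosed B)
    (h : ∀ a ∈ A, Disjoint (connectedComponent a) B) :
    ∃ U, IsClopen U ∧ A ⊆ U ∧ Disjoint U B := by
  have hnbhd : ∀ a ∈ A, ∃ V, IsClopen V ∧ a ∈ V ∧ Disjoint V B := fun a ha => by
    have hdisj := h a ha
    rw [connectedComponent_eq_iInter_isClopen, Set.disjoint_iff_inter_eq_empty,
      Set.inter_comm] at hdisj
    obtain ⟨t, ht⟩ := hB.isCompact.elim_finite_subfamily_closed _ (fun V => V.2.1.isClosed) hdisj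
    refine ⟨⋂ V ∈ t, V, isClopen_biInter_finset fun V _ => V.2.1,
      Set.mem_iInter₂.2 fun V _ => V.2.2, ?_⟩
    rwa [Set.disjoint_iff_inter_eq_empty, Set.inter_comm]
  choose! V hV haV hVB using hnbhd
  obtain ⟨t, ht⟩ := hA.isCompact.elim_nhds_subcover' (fun a _ => V a)
    fun a ha => (hV a ha).isOpen.mem_nhds (haV a ha)
  refine ⟨⋃ a ∈ t, V a, isClopen_biUnion_finset fun a _ => hV a a.2, ht, ?_⟩
  exact Set.disjoint_iUnion₂_left.2 fun a _ => hVB a a.2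

lemma exists_isClosed_cover_of_not_connected {E : Type*} [TopologicalSpace E] [T2Space E]
    {Z A B : Set E} (hZ : IsCompact Z) (hA : IsClosed A) (hB : IsClosed B) (hAB : Disjoint A B)
    (h : ¬ ∃ S ⊆ Z, IsPreconnected S ∧ (S ∩ A).Nonempty ∧ (S ∩ B).Nonempty) :
    ∃ Z₀ Z₁, IsClosed Z₀ ∧ IsClosed Z₁ ∧ Disjoint Z₀ Z₁ ∧ Z ⊆ Z₀ ∪ Z₁ ∧ A ⊆ Z₀ ∧ B ⊆ Z₁ := by
  have := isCompact_iff_compactSpace.1 hZ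
  obtain ⟨U, hU, hAU, hUB⟩ := exists_isClopen_of_forall_disjoint_connectedComponent
    (hA.preimage continuous_subtype_val) (hB.preimage continuous_subtype_val)
    (A := ((↑) : Z → E) ⁻¹' A) (B := ((↑) : Z → E) ⁻¹' B) fun a ha =>
      Set.disjoint_left.2 fun b hb hbB => h ⟨(↑) '' connectedComponent a,
        Subtype.coe_image_subset _ _,
        isPreconnected_connectedComponent.image _ continuous_subtype_val.continuousOn,
        ⟨a, Set.mem_image_of_mem _ mem_connectedComponent, ha⟩,
        ⟨b, Set.mem_image_of_mem _ hb, hbB⟩⟩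
  have hclosed : ∀ V : Set Z, IsClosed V → IsClosed (((↑) : Z → E) '' V) := fun V hV =>
    (hV.isCompact.image continuous_subtype_val).isClosed
  refine ⟨(↑) '' U ∪ A, (↑) '' Uᶜ ∪ B, (hclosed _ hU.isClosed).union hA,
    (hclosed _ hU.compl.isClosed).union hB, ?_, fun x hx => ?_, Set.subset_union_right,
    Set.subset_union_right⟩
  · refine Set.disjoint_union_left.2 ⟨Set.disjoint_union_right.2 ⟨?_, ?_⟩,
      Set.disjoint_union_right.2 ⟨?_, hAB⟩⟩
    · exact (Set.disjoint_image_iff Subtype.val_injective).2 disjoint_compl_right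
    · exact Set.disjoint_left.2 fun _ ⟨z, hzU, hz⟩ hxB =>
        Set.disjoint_left.1 hUB hzU (show (z : E) ∈ B from hz ▸ hxB)
    · exact Set.disjoint_left.2 fun x hxA ⟨z, hzU, hz⟩ =>
        hzU (hAU (show (z : E) ∈ A from hz ▸ hxA))
  · by_cases hxU : (⟨x, hx⟩ : Z) ∈ U
    · exact Or.inl (Or.inl ⟨_, hxU, rfl⟩)
    · exact Or.inr (Or.inl ⟨_, hxU, rfl⟩)

lemma isClosed_face (n : ℕ) (i : Fin n) (v : ℝ) : IsClosed (face n i v) :=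
  isClosed_Icc.inter (isClosed_eq (continuous_apply i) continuous_const)

lemma disjoint_face_zero_one (n : ℕ) (i : Fin n) : Disjoint (face n i 0) (face n i 1) :=
  Set.disjoint_left.2 fun _ h0 h1 => zero_ne_one (h0.2.symm.trans h1.2)

lemma exists_zero_of_snoc {n : ℕ} (f : (Fin (n + 1) → ℝ) → Fin n → ℝ)
    (h : (Fin (n + 1) → ℝ) → ℝ) (hf : ContinuousOn f (unitCube (n + 1)))
    (hh : ContinuousOn h (unitCube (n + 1)))
    (hf_zero : ∀ i : Fin n, ∀ x ∈ face (n + 1) i.castSucc 0, 0 ≤ f x i)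
    (hf_one : ∀ i : Fin n, ∀ x ∈ face (n + 1) i.castSucc 1, f x i ≤ 0)
    (hh_zero : ∀ x ∈ face (n + 1) (Fin.last n) 0, 0 ≤ h x)
    (hh_one : ∀ x ∈ face (n + 1) (Fin.last n) 1, h x ≤ 0) :
    ∃ x ∈ unitCube (n + 1), f x = 0 ∧ h x = 0 := by
  obtain ⟨x, hx, hzero⟩ := poincare_miranda (fun x => Fin.snoc (f x) (h x))
    (continuousOn_pi.2 <| Fin.lastCases (by simpa using hh) fun i => by
      simpa using continuousOn_pi.1 hf i)
    (Fin.lastCases (by simpa using hh_zero) fun i => by simpa using hf_zero i)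
    (Fin.lastCases (by simpa using hh_one) fun i => by simpa using hf_one i)
  refine ⟨x, hx, funext fun i => ?_, ?_⟩
  · simpa using congrFun hzero i.castSucc
  · simpa using congrFun hzero (Fin.last n)

end PoincareMiranda

open PoincareMiranda in
theorem stmt19_general {n : ℕ} (f : (Fin (n + 1) → ℝ) → (Fin n → ℝ))
    (hf : ContinuousOn f (unitCube (n + 1)))
    (hminus : ∀ i : Fin n, ∀ x ∈ face (n + 1) i.castSucc 0, 0 ≤ f x i)
    (hplus : ∀ i : Fin n, ∀ x ∈ face (n + 1) i.castSucc 1, f x i ≤ 0) :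
    ∃ W ⊆ {x ∈ unitCube (n + 1) | f x = 0}, IsPreconnected W ∧
      (W ∩ face (n + 1) (Fin.last n) 0).Nonempty ∧
      (W ∩ face (n + 1) (Fin.last n) 1).Nonempty := by
  by_contra hW
  have hZ : IsCompact {x ∈ unitCube (n + 1) | f x = 0} :=
    isCompact_Icc.of_isClosed_subset
      (hf.preimage_isClosed_of_isClosed isClosed_Icc isClosed_singleton) fun x hx => hx.1
  obtain ⟨Z₀, Z₁, hZ₀, hZ₁, hdisj, hcover, hbottom, htop⟩ :=
    exists_isClosed_cover_of_not_connected hZ (isClosed_face _ _ _) (isClosed_face _ _ _)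
      (disjoint_face_zero_one _ _) hW
  obtain ⟨g, hg₀, hg₁, -⟩ := exists_continuous_zero_one_of_isClosed hZ₀ hZ₁ hdisj
  obtain ⟨x, hx, hfx, hgx⟩ := exists_zero_of_snoc f (fun x => 1 / 2 - g x) hf
    (by fun_prop) hminus hplus (fun x hx => by simp [hg₀ (hbottom hx)])
    (fun x hx => by norm_num [hg₁ (htop hx)])
  rcases hcover ⟨hx, hfx⟩ with h | h
  · norm_num [hg₀ h] at hgx
  · norm_num [hg₁ h] at hgx

theorem stmt19 {n : ℕ} (hn : 1 ≤ n) (f : (Fin (n + 1) → ℝ) → (Fin n → ℝ))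
    (hf : ContinuousOn f (unitCube (n + 1)))
    (hminus : ∀ i : Fin n, ∀ x ∈ face (n + 1) i.castSucc 0, 0 ≤ f x i)
    (hplus : ∀ i : Fin n, ∀ x ∈ face (n + 1) i.castSucc 1, f x i ≤ 0) :
    ∃ W ⊆ {x ∈ unitCube (n + 1) | f x = 0}, IsPreconnected W ∧
      (W ∩ face (n + 1) (Fin.last n) 0).Nonempty ∧
      (W ∩ face (n + 1) (Fin.last n) 1).Nonempty :=
  stmt19_general f hf hminus hplus
end
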